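/- Let n be an even natural number and let P be a set of n points in ℝ^2 in general position (no three points of P are collinear). Let G be the halving edge graph of P. Then every vertex of G has odd degree. -/

import Mathlib

noncomputable section

/-- The 2×2 determinant of two vectors in the plane. -/
def det2 (u v : ℝ × ℝ) : ℝ := u.1 * v.2 - u.2 * v.1

/-- A finite point set in the plane is in general position if no three of its points
are collinear. -/
def GenPos (P : Finset (ℝ × ℝ)) : Prop :=
  ∀ a ∈ P, ∀ b ∈ P, ∀ c ∈ P, a ≠ b → a ≠ c → b ≠ c → det2 (b - a) (c - a) ≠ 0

/-- `{a, b}` is a halving edge of `P`: `a, b` are distinct points of `P` and the line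
through `a` and `b` has exactly `(|P| - 2)/2` points of `P` strictly on each side
(equivalently, the number of `p ∈ P \ {a, b}` with `det (b - a) (p - a) > 0` is
`(|P| - 2)/2`). -/
def IsHalvingEdge (P : Finset (ℝ × ℝ)) (a b : ℝ × ℝ) : Prop :=
  a ∈ P ∧ b ∈ P ∧ a ≠ b ∧
    ((P \ {a, b}).filter (fun p => 0 < det2 (b - a) (p - a))).card = (P.card - 2) / 2

/-- The degree of a point `v` in the halving edge graph of `P`: the number of halving
edges incident to `v`. -/
def halvingDegree (P : Finset (ℝ × ℝ)) (v : ℝ × ℝ) : ℕ :=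
  Set.ncard {w : ℝ × ℝ | IsHalvingEdge P v w}

/-- The number of halving edges of `P` (edges of the halving edge graph). -/
def halvingEdgeCount (P : Finset (ℝ × ℝ)) : ℕ :=
  Set.ncard {e : Sym2 (ℝ × ℝ) | ∃ a b, e = s(a, b) ∧ IsHalvingEdge P a b}

/-- The number of crossings of the halving edge graph of `P`: unordered pairs of
halving edges `{a, b}`, `{x, y}` with `{a, b} ∩ {x, y} = ∅` whose open segments
intersect. -/
def crossingCount (P : Finset (ℝ × ℝ)) : ℕ :=
  Set.ncard {c : Sym2 (Sym2 (ℝ × ℝ)) | ∃ a b x y,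
    c = s(s(a, b), s(x, y)) ∧ IsHalvingEdge P a b ∧ IsHalvingEdge P x y ∧
    ({a, b} : Set (ℝ × ℝ)) ∩ {x, y} = ∅ ∧
    (openSegment ℝ a b ∩ openSegment ℝ x y).Nonempty}

end

/-!
Fix `v ∈ P` and view the other `m = n - 1` points as vectors from `v`; by general position they
span distinct lines. Sorting these lines by angle, the orientation of any two points is
determined by their ranks and by which of them lie in the upper half-plane. Rotate a directed line about `v` through a half-turn, starting and ending
horizontally. The number of points on its left changes by `±1` whenever the line passes a point
`w`, and `{v, w}` is a halving edge exactly when this count moves between `(m - 1) / 2` and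
`(m + 1) / 2` there. After the half-turn the count has become `m` minus its initial value, so
it has crossed the odd middle `m / 2` an odd number of times.
-/

open Finset

lemma det2_comm (a b : ℝ × ℝ) : det2 a b = -det2 b a := by
  simp only [det2]; ring

lemma det2_self (a : ℝ × ℝ) : det2 a a = 0 := by
  simp only [det2]; ring

lemma det2_neg_left (a b : ℝ × ℝ) : det2 (-a) b = -det2 a b := by
  simp only [det2, Prod.fst_neg, Prod.snd_neg]; ring

lemma det2_neg_right (a b : ℝ × ℝ) : det2 a (-b) = -det2 a b := by
  simp only [det2, Prod.fst_neg, Prod.snd_neg]; ring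

def IsUpperHalf (z : ℝ × ℝ) : Prop := 0 < z.2 ∨ (z.2 = 0 ∧ 0 < z.1)

lemma isUpperHalf_neg {z : ℝ × ℝ} (hz : z ≠ 0) (h : ¬IsUpperHalf z) : IsUpperHalf (-z) := by
  simp only [IsUpperHalf, not_or, not_and, not_lt] at h ⊢
  simp only [Prod.snd_neg, Prod.fst_neg, Left.neg_pos_iff, neg_eq_zero]
  rcases h.1.lt_or_eq with h2 | h2
  · exact Or.inl h2
  · refine Or.inr ⟨h2, (h.2 h2).lt_of_ne fun h1 => hz (Prod.ext h1 h2)⟩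

/-- Minus the cotangent of the angle of `z`, and `⊥` for horizontal `z`: it depends only on
the line spanned by `z`, and increases with the angle on the half-open upper half-plane. -/
noncomputable def slopeKey (z : ℝ × ℝ) : WithBot ℝ :=
  if z.2 = 0 then ⊥ else ((-z.1 / z.2 : ℝ) : WithBot ℝ)

lemma slopeKey_neg (z : ℝ × ℝ) : slopeKey (-z) = slopeKey z := by
  simp only [slopeKey, Prod.snd_neg, Prod.fst_neg, neg_eq_zero, neg_div_neg_eq]

lemma det2_eq_zero_of_slopeKey_eq {a b : ℝ × ℝ} (h : slopeKey a = slopeKey b) :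
    det2 a b = 0 := by
  unfold slopeKey at h
  split_ifs at h with ha hb hb
  · simp [det2, ha, hb]
  · exact absurd h.symm WithBot.coe_ne_bot
  · exact absurd h WithBot.coe_ne_bot
  · rw [WithBot.coe_inj, neg_div, neg_div, neg_inj, div_eq_div_iff ha hb] at h
    simp only [det2]; linarith

lemma det2_pos_iff_slopeKey_lt {a b : ℝ × ℝ} (ha : IsUpperHalf a) (hb : IsUpperHalf b)
    (hab : det2 a b ≠ 0) : 0 < det2 a b ↔ slopeKey a < slopeKey b := by
  unfold slopeKey det2 at *
  rcases ha with ha | ⟨ha2, ha1⟩ <;> rcases hb with hb | ⟨hb2, hb1⟩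
  · rw [if_neg ha.ne', if_neg hb.ne', WithBot.coe_lt_coe, div_lt_div_iff₀ ha hb]
    constructor <;> intro h <;> linarith
  · rw [if_neg ha.ne', if_pos hb2, hb2, iff_false_intro not_lt_bot, iff_false, not_lt]
    nlinarith
  · rw [if_pos ha2, if_neg hb.ne', ha2, iff_true_intro (WithBot.bot_lt_coe _), iff_true]
    nlinarith
  · simp [ha2, hb2] at hab

lemma det2_neg_iff_slopeKey_lt {a b : ℝ × ℝ} (ha : IsUpperHalf a) (hb : IsUpperHalf b)
    (hab : det2 a b ≠ 0) : det2 a b < 0 ↔ slopeKey b < slopeKey a := by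
  rw [det2_comm] at hab ⊢
  rw [neg_lt_zero]
  exact det2_pos_iff_slopeKey_lt hb ha (neg_ne_zero.mp hab)

open Classical in
lemma det2_pos_iff {a b : ℝ × ℝ} (ha : a ≠ 0) (hb : b ≠ 0) (hab : det2 a b ≠ 0) :
    0 < det2 a b ↔
      if (IsUpperHalf a ↔ IsUpperHalf b) then slopeKey a < slopeKey b
      else slopeKey b < slopeKey a := by
  by_cases hua : IsUpperHalf a <;> by_cases hub : IsUpperHalf b <;> simp only [hua, hub]
  · simpa using det2_pos_iff_slopeKey_lt hua hub hab
  · have := det2_neg_iff_slopeKey_lt hua (isUpperHalf_neg hb hub)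
      (by rwa [det2_neg_right, neg_ne_zero])
    simpa [det2_neg_right, slopeKey_neg] using this
  · have := det2_neg_iff_slopeKey_lt (isUpperHalf_neg ha hua) hub
      (by rwa [det2_neg_left, neg_ne_zero])
    simpa [det2_neg_left, slopeKey_neg] using this
  · have := det2_pos_iff_slopeKey_lt (isUpperHalf_neg ha hua) (isUpperHalf_neg hb hub)
      (by rwa [det2_neg_left, det2_neg_right, neg_neg])
    simpa [det2_neg_left, det2_neg_right, slopeKey_neg] using this

theorem odd_card_filter_ne_succ_iff (b : ℕ → Bool) (m : ℕ) :
    Odd #{i : Fin m | b i ≠ b (i + 1)} ↔ b 0 ≠ b m := by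
  induction m with
  | zero => simp
  | succ m ih =>
    rw [card_filter, Fin.sum_univ_castSucc, ← card_filter]
    simp only [Fin.val_castSucc, Fin.val_last]
    split_ifs with h
    · rw [Nat.odd_add_one, ih]
      revert h; cases b 0 <;> cases b m <;> cases b (m + 1) <;> simp
    · rw [add_zero, ih]
      revert h; cases b 0 <;> cases b m <;> cases b (m + 1) <;> simp

section SignPattern

variable {m : ℕ} (ε : Fin m → Bool)

def patternOutdeg (i : Fin m) : ℕ := #{j | if ε i = ε j then i < j else j < i}

/-- If `ε j` records whether the `j`-th of `m` vectors, sorted by the angle of the lines they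
span, lies in the upper half-plane, this counts the vectors left of a line through the origin,
pointing into the upper half-plane, whose direction lies strictly between the `(k-1)`-st and
the `k`-th of those lines. -/
def patternCut (k : ℕ) : ℕ := #{j : Fin m | if ε j then k ≤ j else j < k}

lemma patternCut_succ (i : Fin m) :
    patternCut ε (i + 1) + (if ε i then 1 else 0) = patternCut ε i + (if ε i then 0 else 1) := by
  have hrest : ∀ j ≠ i, ((if ε j then (i : ℕ) + 1 ≤ j else j < (i : ℕ) + 1) ↔
      (if ε j then (i : ℕ) ≤ j else j < (i : ℕ))) := fun j hj => by
    have := Fin.val_ne_of_ne hj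
    cases ε j <;> simp <;> omega
  simp only [patternCut, card_filter]
  rw [Fintype.sum_eq_add_sum_compl i, Fintype.sum_eq_add_sum_compl i,
    sum_congr rfl fun j hj => if_congr (hrest j (by simpa using hj)) rfl rfl]
  cases ε i <;> simp <;> omega

lemma patternOutdeg_of_true {i : Fin m} (h : ε i = true) :
    patternOutdeg ε i = patternCut ε (i + 1) := by
  refine congrArg card (filter_congr fun j _ => ?_)
  cases hj : ε j
  · have : (j : ℕ) ≠ i := Fin.val_ne_of_ne (by rintro rfl; simp_all)
    simp [h]; omega
  · simp [h]

lemma patternOutdeg_add_patternCut_of_false {i : Fin m} (h : ε i = false) :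
    patternOutdeg ε i + patternCut ε (i + 1) = m := by
  have : patternOutdeg ε i = #{j : Fin m | ¬ if ε j then i + 1 ≤ (j : ℕ) else j < (i : ℕ) + 1} := by
    refine congrArg card (filter_congr fun j _ => ?_)
    cases hj : ε j <;> simp [h]
    exact ⟨le_of_lt, (lt_of_le_of_ne · (by rintro rfl; simp_all))⟩
  rw [this, patternCut, add_comm, card_filter_add_card_filter_not, card_univ,
    Fintype.card_fin]

lemma patternCut_zero_add_patternCut : patternCut ε 0 + patternCut ε m = m := by
  have h0 : patternCut ε 0 = #{j | ε j} :=
    congrArg card (filter_congr fun j _ => by cases ε j <;> simp)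
  have hm : patternCut ε m = #{j | ¬ ε j} :=
    congrArg card (filter_congr fun j _ => by cases ε j <;> simp [j.isLt])
  rw [h0, hm, card_filter_add_card_filter_not, card_univ, Fintype.card_fin]

lemma patternOutdeg_eq_iff {h : ℕ} (hm : m = 2 * h + 1) (i : Fin m) :
    patternOutdeg ε i = h ↔ decide (patternCut ε i ≤ h) ≠ decide (patternCut ε (i + 1) ≤ h) := by
  have hstep := patternCut_succ ε i
  cases hi : ε i
  · have := patternOutdeg_add_patternCut_of_false ε hi
    simp only [hi, Bool.false_eq_true, ↓reduceIte] at hstep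
    simp only [ne_eq, decide_eq_decide]
    omega
  · rw [patternOutdeg_of_true ε hi]
    simp only [hi, ↓reduceIte] at hstep
    simp only [ne_eq, decide_eq_decide]
    omega

theorem odd_card_patternOutdeg_eq {h : ℕ} (hm : m = 2 * h + 1) :
    Odd #{i | patternOutdeg ε i = h} := by
  rw [filter_congr fun i _ => patternOutdeg_eq_iff ε hm i,
    odd_card_filter_ne_succ_iff (fun k => decide (patternCut ε k ≤ h)) m]
  have := patternCut_zero_add_patternCut ε
  simp only [ne_eq, decide_eq_decide]
  omega

end SignPattern

theorem exists_fin_enum_strictMono {α β : Type*} [LinearOrder β] {s : Finset α} {m : ℕ}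
    (hs : #s = m) {f : α → β} (hf : Set.InjOn f s) :
    ∃ e : Fin m ↪ α, univ.map e = s ∧ StrictMono (f ∘ e) := by
  have hcard : #(s.image f) = m := (card_image_of_injOn hf).trans hs
  have hg (i : Fin m) : ∃ a ∈ s, f a = (s.image f).orderEmbOfFin hcard i :=
    mem_image.mp (orderEmbOfFin_mem _ _ i)
  choose e hes hfe using hg
  have hmono : StrictMono (f ∘ e) := fun i j hij => by
    simpa only [Function.comp_apply, hfe] using (orderEmbOfFin _ hcard).strictMono hij
  refine ⟨⟨e, hmono.injective.of_comp⟩, eq_of_subset_of_card_le ?_ (by simp [hs]), hmono⟩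
  intro a ha
  obtain ⟨i, -, rfl⟩ := mem_map.mp ha
  exact hes i

noncomputable def leftCount (S : Finset (ℝ × ℝ)) (u : ℝ × ℝ) : ℕ := #{p ∈ S | 0 < det2 u p}

theorem exists_sign_pattern {S : Finset (ℝ × ℝ)} {m : ℕ} (hcard : #S = m)
    (hS0 : (0 : ℝ × ℝ) ∉ S) (hS : ∀ a ∈ S, ∀ b ∈ S, a ≠ b → det2 a b ≠ 0) :
    ∃ e : Fin m ↪ ℝ × ℝ, univ.map e = S ∧ ∃ ε : Fin m → Bool,
      ∀ i j, 0 < det2 (e i) (e j) ↔ if ε i = ε j then i < j else j < i := by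
  have hinj : Set.InjOn slopeKey S := fun a ha b hb hab =>
    by_contra fun hne => hS a ha b hb hne (det2_eq_zero_of_slopeKey_eq hab)
  classical
  obtain ⟨e, hes, hmono⟩ := exists_fin_enum_strictMono hcard hinj
  have hmem (i) : e i ∈ S := by rw [← hes]; exact mem_map_of_mem e (mem_univ i)
  refine ⟨e, hes, fun i => decide (IsUpperHalf (e i)), fun i j => ?_⟩
  rcases eq_or_ne i j with rfl | hij
  · simp [det2_self]
  rw [det2_pos_iff (ne_of_mem_of_not_mem (hmem i) hS0) (ne_of_mem_of_not_mem (hmem j) hS0)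
    (hS _ (hmem i) _ (hmem j) (e.injective.ne hij))]
  simp only [decide_eq_decide, ← Function.comp_apply (f := slopeKey), hmono.lt_iff_lt]

theorem odd_card_leftCount_eq {S : Finset (ℝ × ℝ)} {h : ℕ} (hS0 : (0 : ℝ × ℝ) ∉ S)
    (hS : ∀ a ∈ S, ∀ b ∈ S, a ≠ b → det2 a b ≠ 0) (hcard : #S = 2 * h + 1) :
    Odd #{u ∈ S | leftCount S u = h} := by
  obtain ⟨e, hes, ε, horient⟩ := exists_sign_pattern hcard hS0 hS
  have hleft (i) : leftCount S (e i) = patternOutdeg ε i := by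
    rw [leftCount, ← hes, filter_map, card_map]
    exact congrArg card (filter_congr fun j _ => horient i j)
  have hcount : #{u ∈ S | leftCount S u = h} = #{i | patternOutdeg ε i = h} := by
    rw [show S.filter (leftCount S · = h) = (univ.map e).filter (leftCount S · = h) by rw [hes],
      filter_map, card_map]
    simp only [Function.comp_def, hleft]
  exact hcount ▸ odd_card_patternOutdeg_eq ε rfl

lemma card_filter_image_sub (s : Finset (ℝ × ℝ)) (v : ℝ × ℝ) (p : ℝ × ℝ → Prop)
    [DecidablePred p] : #{u ∈ s.image (· - v) | p u} = #{w ∈ s | p (w - v)} := by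
  rw [filter_image, card_image_of_injective _ (sub_left_injective)]

lemma isHalvingEdge_iff_leftCount {P : Finset (ℝ × ℝ)} {v w : ℝ × ℝ} (hv : v ∈ P)
    (hw : w ∈ P.erase v) :
    IsHalvingEdge P v w ↔ leftCount ((P.erase v).image (· - v)) (w - v) = (#P - 2) / 2 := by
  have hfilter : (P \ {v, w}).filter (fun p => 0 < det2 (w - v) (p - v)) =
      (P.erase v).filter (fun p => 0 < det2 (w - v) (p - v)) := by
    ext p
    by_cases hpw : p = w
    · simp [hpw, det2_self]
    · simp [hpw, and_comm]
  rw [IsHalvingEdge, leftCount, card_filter_image_sub, ← hfilter]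
  simp [hv, mem_of_mem_erase hw, (ne_of_mem_erase hw).symm]

lemma halvingDegree_eq_card_leftCount {P : Finset (ℝ × ℝ)} {v : ℝ × ℝ} (hv : v ∈ P) :
    halvingDegree P v = #{u ∈ (P.erase v).image (· - v) |
      leftCount ((P.erase v).image (· - v)) u = (#P - 2) / 2} := by
  classical
  have hset : {w | IsHalvingEdge P v w} = ↑((P.erase v).filter (IsHalvingEdge P v)) := by
    ext w
    simp only [Set.mem_ofPred_eq, coe_filter, mem_erase]
    exact ⟨fun h => ⟨⟨h.2.2.1.symm, h.2.1⟩, h⟩, And.right⟩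
  rw [halvingDegree, hset, Set.ncard_coe_finset, card_filter_image_sub]
  exact congrArg card (filter_congr fun w hw => isHalvingEdge_iff_leftCount hv hw)

/-- every vertex of the halving edge graph has odd degree. -/
theorem halvingDegree_odd (n : ℕ) (hn : Even n) (P : Finset (ℝ × ℝ))
    (hcard : P.card = n) (hgp : GenPos P) :
    ∀ v ∈ P, Odd (halvingDegree P v) := by
  intro v hv
  obtain ⟨h, hh⟩ : ∃ h, #P = 2 * h + 2 := by
    obtain ⟨k, hk⟩ := hn
    exact ⟨k - 1, by have := card_pos.mpr ⟨v, hv⟩; omega⟩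
  rw [halvingDegree_eq_card_leftCount hv, hh, show (2 * h + 2 - 2) / 2 = h by omega]
  refine odd_card_leftCount_eq ?_ ?_ ?_
  · simp [sub_eq_zero]
  · simp only [mem_image, mem_erase]
    rintro _ ⟨a, ⟨hav, ha⟩, rfl⟩ _ ⟨b, ⟨hbv, hb⟩, rfl⟩ hab
    exact hgp v hv a ha b hb (Ne.symm hav) (Ne.symm hbv) fun h => hab (h ▸ rfl)
  · rw [card_image_of_injective _ sub_left_injective, card_erase_of_mem hv, hh]
    rfl
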